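/- arXiv:2305.10560 — 3 statements merged into one kernel-verified Lean document; each statement's English description precedes it below -/
import Mathlib

section
/- Let N ≥ 2, θ = 2π/(2N-1), and ξ_k = e^{ikθ}. There exists ε₀ > 0 (depending only on N) such that for every complex z with |z| ≤ ε₀, there exist nonnegative reals p_0, ..., p_{2N-2} with ∑_{k=0}^{2N-2} p_k = 1 and z^m = ∑_{k=0}^{2N-2} p_k ξ_k^m for all 0 ≤ m ≤ N-1. -/
/-!
Weight the `M = 2N - 1` roots of unity `ζ^k` by the values of the real trigonometric polynomial
`(1 + 2 Re ∑_{j=1}^{N-1} z^j \bar w^j) / M`. Every frequency difference occurring in the `m`-th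
moment (`m < N`) has absolute value less than `M`, so orthogonality of the characters of `ℤ/M`
leaves exactly `z^m`. The weights are nonnegative as soon as `∑_{j≥1} |z|^j ≤ 1/2`, which holds for
`|z| ≤ 1/3` whatever `N` is.
-/

open Finset ComplexConjugate

theorem IsPrimitiveRoot.sum_zpow_pow_of_abs_lt {K : Type*} [Field K] {ζ : K} {M : ℕ}
    (hζ : IsPrimitiveRoot ζ M) {t : ℤ} (ht : |t| < M) :
    ∑ k ∈ range M, (ζ ^ t) ^ k = if t = 0 then (M : K) else 0 := by
  split_ifs with ht₀
  · simp [ht₀]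
  · have hne : ζ ^ t ≠ 1 := fun h ↦
      ht₀ (Int.eq_zero_of_abs_lt_dvd ((hζ.zpow_eq_one_iff_dvd t).mp h) ht)
    rw [geom_sum_eq hne, ← zpow_natCast, ← zpow_mul, mul_comm, zpow_mul, zpow_natCast,
      hζ.pow_eq_one, one_zpow, sub_self, zero_div]

theorem conj_pow_pow_mul_pow_pow {ζ : ℂ} (hζ : ‖ζ‖ = 1) (k j m : ℕ) :
    conj (ζ ^ k) ^ j * (ζ ^ k) ^ m = (ζ ^ ((m : ℤ) - j)) ^ k := by
  have hζ₀ : ζ ≠ 0 := by rintro rfl; simp at hζ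
  rw [← Complex.inv_eq_conj (by simp [hζ]), zpow_sub₀ hζ₀, div_pow, zpow_natCast, zpow_natCast,
    inv_pow, ← pow_mul, ← pow_mul, ← pow_mul, ← pow_mul, mul_comm k j, mul_comm k m,
    div_eq_mul_inv, mul_comm]

noncomputable def momentDensity (M : ℕ) (a : ℕ → ℂ) (n : ℕ) (w : ℂ) : ℝ :=
  (1 + 2 * (∑ j ∈ Ico 1 n, a j * conj w ^ j).re) / M

theorem ofReal_momentDensity (M : ℕ) (a : ℕ → ℂ) (n : ℕ) (w : ℂ) :
    (momentDensity M a n w : ℂ) =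
      (1 + ∑ j ∈ Ico 1 n, a j * conj w ^ j + ∑ j ∈ Ico 1 n, conj (a j) * w ^ j) / M := by
  have hconj : ∑ j ∈ Ico 1 n, conj (a j) * w ^ j = conj (∑ j ∈ Ico 1 n, a j * conj w ^ j) := by
    simp
  rw [hconj, add_assoc, Complex.add_conj, momentDensity]
  push_cast
  ring

theorem momentDensity_nonneg {M n : ℕ} {a : ℕ → ℂ} {w : ℂ} (hw : ‖w‖ = 1)
    (ha : ∑ j ∈ Ico 1 n, ‖a j‖ ≤ 1 / 2) : 0 ≤ momentDensity M a n w := by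
  have hS : ‖∑ j ∈ Ico 1 n, a j * conj w ^ j‖ ≤ 1 / 2 :=
    calc ‖∑ j ∈ Ico 1 n, a j * conj w ^ j‖ ≤ ∑ j ∈ Ico 1 n, ‖a j * conj w ^ j‖ := norm_sum_le _ _
      _ = ∑ j ∈ Ico 1 n, ‖a j‖ := by simp [hw]
      _ ≤ 1 / 2 := ha
  unfold momentDensity
  have hre := (abs_le.mp (Complex.abs_re_le_norm (∑ j ∈ Ico 1 n, a j * conj w ^ j))).1
  exact div_nonneg (by linarith) M.cast_nonneg

theorem sum_momentDensity_mul_pow {ζ : ℂ} {M n : ℕ} (hζ : IsPrimitiveRoot ζ M)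
    (hnM : 2 * n ≤ M + 1) {a : ℕ → ℂ} (ha₀ : a 0 = 1) {m : ℕ} (hm : m < n) :
    ∑ k ∈ range M, (momentDensity M a n (ζ ^ k) : ℂ) * (ζ ^ k) ^ m = a m := by
  have hM : M ≠ 0 := by omega
  have hζ₁ := hζ.norm'_eq_one hM
  have pow_pow_eq (k i : ℕ) : (ζ ^ k) ^ i = (ζ ^ (i : ℤ)) ^ k := by
    rw [zpow_natCast, ← pow_mul, ← pow_mul, mul_comm]
  have h_const : ∑ k ∈ range M, (ζ ^ k) ^ m = if m = 0 then (M : ℂ) else 0 := by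
    simp only [pow_pow_eq _ m]
    rw [hζ.sum_zpow_pow_of_abs_lt (by rw [abs_of_nonneg (by positivity)]; omega)]
    simp only [Nat.cast_eq_zero]
  have h_diag : ∀ j ∈ Ico 1 n,
      ∑ k ∈ range M, conj (ζ ^ k) ^ j * (ζ ^ k) ^ m = if j = m then (M : ℂ) else 0 := by
    intro j hj
    rw [mem_Ico] at hj
    simp only [conj_pow_pow_mul_pow_pow hζ₁]
    rw [hζ.sum_zpow_pow_of_abs_lt (by rw [abs_lt]; omega)]
    simp only [sub_eq_zero, Nat.cast_inj, eq_comm]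
  have h_off : ∀ j ∈ Ico 1 n, ∑ k ∈ range M, (ζ ^ k) ^ j * (ζ ^ k) ^ m = 0 := by
    intro j hj
    rw [mem_Ico] at hj
    simp only [← pow_add, pow_pow_eq _ (j + m)]
    rw [hζ.sum_zpow_pow_of_abs_lt (by rw [abs_of_nonneg (by positivity)]; omega), if_neg (by omega)]
  calc ∑ k ∈ range M, (momentDensity M a n (ζ ^ k) : ℂ) * (ζ ^ k) ^ m
      = (∑ k ∈ range M, (ζ ^ k) ^ m
          + ∑ j ∈ Ico 1 n, a j * ∑ k ∈ range M, conj (ζ ^ k) ^ j * (ζ ^ k) ^ m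
          + ∑ j ∈ Ico 1 n, conj (a j) * ∑ k ∈ range M, (ζ ^ k) ^ j * (ζ ^ k) ^ m) / M := by
        simp only [mul_sum]
        rw [sum_comm (s := Ico 1 n), sum_comm (s := Ico 1 n), ← sum_add_distrib,
          ← sum_add_distrib, sum_div]
        refine sum_congr rfl fun k _ ↦ ?_
        rw [ofReal_momentDensity, div_mul_eq_mul_div, add_mul, add_mul, sum_mul, sum_mul]
        simp only [one_mul, mul_assoc]
    _ = a m := by
        rw [h_const, sum_congr rfl fun j hj ↦ congrArg (a j * ·) (h_diag j hj),
          sum_congr rfl fun j hj ↦ congrArg (conj (a j) * ·) (h_off j hj)]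
        simp only [mul_ite, mul_zero, sum_ite_eq', mem_Ico, sum_const_zero, add_zero]
        have hM' : (M : ℂ) ≠ 0 := Nat.cast_ne_zero.mpr hM
        split_ifs with hm₀ <;> first | omega | simp [hm₀, ha₀, hM']

theorem sum_Ico_norm_pow_le_half {z : ℂ} (hz : ‖z‖ ≤ 1 / 3) (n : ℕ) :
    ∑ j ∈ Ico 1 n, ‖z ^ j‖ ≤ 1 / 2 := by
  simp only [norm_pow]
  calc ∑ j ∈ Ico 1 n, ‖z‖ ^ j ≤ ‖z‖ ^ 1 / (1 - ‖z‖) :=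
        geom_sum_Ico_le_of_lt_one (norm_nonneg z) (by linarith)
    _ ≤ 1 / 2 := by rw [div_le_iff₀ (by linarith)]; linarith

theorem stmt5 (N : ℕ) (hN : 2 ≤ N) (ξ : ℕ → ℂ)
    (hξ : ∀ k, ξ k = Complex.exp (2 * Real.pi * Complex.I * k / (2 * N - 1))) :
    ∃ ε₀ : ℝ, 0 < ε₀ ∧
      ∀ z : ℂ, ‖z‖ ≤ ε₀ →
        ∃ p : ℕ → ℝ, (∀ k, 0 ≤ p k) ∧
          (∑ k ∈ Finset.range (2 * N - 1), p k = 1) ∧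
          ∀ m ≤ N - 1, z ^ m = ∑ k ∈ Finset.range (2 * N - 1), (p k : ℂ) * ξ k ^ m := by
  set ζ := Complex.exp (2 * Real.pi * Complex.I / (2 * N - 1 : ℕ))
  have hM : 2 * N - 1 ≠ 0 := by omega
  have hζ : IsPrimitiveRoot ζ (2 * N - 1) := Complex.isPrimitiveRoot_exp _ hM
  obtain rfl : ξ = (ζ ^ ·) := funext fun k ↦ by
    rw [hξ, ← Complex.exp_nat_mul, Nat.cast_sub (by omega)]
    push_cast
    ring_nf
  refine ⟨1 / 3, by norm_num, fun z hz ↦ ?_⟩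
  have h_moment (m : ℕ) (hm : m < N) :=
    sum_momentDensity_mul_pow hζ (by omega) (pow_zero z) hm
  refine ⟨fun k ↦ momentDensity (2 * N - 1) (z ^ ·) N (ζ ^ k), fun k ↦ ?_, ?_, fun m hm ↦ ?_⟩
  · exact momentDensity_nonneg (by rw [norm_pow, hζ.norm'_eq_one hM, one_pow])
      (sum_Ico_norm_pow_le_half hz N)
  · have h_total := h_moment 0 (by omega)
    simp only [pow_zero, mul_one] at h_total
    exact_mod_cast h_total
  · exact (h_moment m (by omega)).symm
end

section
/- There exists a polynomial p(z) = a₀ + a₁z + a₂z² with complex coefficients and a point z₀ in the convex hull of {1, ω, ω²} (where ω = e^{2πi/3}) such that |p(z₀)| > max{|p(1)|, |p(ω)|, |p(ω²)|}. In fact one can achieve |p(z₀)| ≥ (1 + 2√3)/4 while max_{k} |p(ω^k)| = 1. -/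
/-!
The quadratic `p z = ((1 + √3) + (1 - √3) z + z²) / 3` equals `1` at `z = 1` and `(√3 / 3) (1 - ω)`
at each primitive cube root of unity `ω`; the latter has modulus `1` because the triangle of cube
roots of unity has side `√3`. At `-1/2`, the midpoint of `ω` and `ω²`, `p` takes the real value
`(1 + 2√3) / 4 > 1`.
-/
open Complex Real

lemma exp_two_pi_I_div_three_sq_add_self_add_one :
    exp (2 * π * I / 3) ^ 2 + exp (2 * π * I / 3) + 1 = 0 := by
  have h := (isPrimitiveRoot_exp 3 (by norm_num)).geom_sum_eq_zero (by norm_num)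
  simp only [Finset.sum_range_succ, Finset.sum_range_zero, Nat.cast_ofNat] at h
  linear_combination h

lemma sq_sq_add_sq_add_one {R : Type*} [CommRing R] {ω : R} (h : ω ^ 2 + ω + 1 = 0) :
    (ω ^ 2) ^ 2 + ω ^ 2 + 1 = 0 := by
  linear_combination (ω ^ 2 - ω + 1) * h

section CubeRoot

variable {ω : ℂ}

lemma neg_half_mem_convexHull (h : ω ^ 2 + ω + 1 = 0) :
    (-1 / 2 : ℂ) ∈ convexHull ℝ {1, ω, ω ^ 2} := by
  have hmid : (-1 / 2 : ℂ) = (1 / 2 : ℝ) • ω + (1 / 2 : ℝ) • ω ^ 2 := by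
    simp only [real_smul]; push_cast; linear_combination (-1 / 2 : ℂ) * h
  rw [hmid]
  exact convex_convexHull ℝ _ (subset_convexHull ℝ _ (by simp)) (subset_convexHull ℝ _ (by simp))
    (by norm_num) (by norm_num) (by norm_num)

lemma norm_eq_one_of_sq_add_self_add_one (h : ω ^ 2 + ω + 1 = 0) : ‖ω‖ = 1 := by
  have hcube : ω ^ 3 = 1 := by linear_combination (ω - 1) * h
  rw [← pow_eq_one_iff_of_nonneg (norm_nonneg ω) (by norm_num : 3 ≠ 0), ← norm_pow, hcube,
    norm_one]

/-- `(1 - ω)² = -3ω`, so the side of the triangle of cube roots of unity is `√3`. -/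
lemma norm_one_sub_of_sq_add_self_add_one (h : ω ^ 2 + ω + 1 = 0) : ‖1 - ω‖ = √3 := by
  have hsq : (1 - ω) ^ 2 = -3 * ω := by linear_combination h
  have : ‖1 - ω‖ ^ 2 = 3 := by
    rw [← norm_pow, hsq, norm_mul, norm_eq_one_of_sq_add_self_add_one h]; norm_num
  rw [← this, Real.sqrt_sq (norm_nonneg _)]

lemma quadratic_eq_mul_one_sub (s : ℂ) (h : ω ^ 2 + ω + 1 = 0) :
    (1 + s) / 3 + (1 - s) / 3 * ω + 1 / 3 * ω ^ 2 = s / 3 * (1 - ω) := by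
  linear_combination h / 3

lemma norm_quadratic_eq_one (h : ω ^ 2 + ω + 1 = 0) :
    ‖(1 + (√3 : ℂ)) / 3 + (1 - √3) / 3 * ω + 1 / 3 * ω ^ 2‖ = 1 := by
  rw [quadratic_eq_mul_one_sub _ h, norm_mul, norm_one_sub_of_sq_add_self_add_one h, norm_div,
    norm_real, Real.norm_of_nonneg (Real.sqrt_nonneg 3), Complex.norm_ofNat]
  field_simp
  exact Real.sq_sqrt (by norm_num)

end CubeRoot

theorem stmt7 (ω : ℂ) (hω : ω = Complex.exp (2 * Real.pi * Complex.I / 3)) :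
    ∃ a₀ a₁ a₂ z₀ : ℂ,
      z₀ ∈ convexHull ℝ ({1, ω, ω ^ 2} : Set ℂ) ∧
      max (‖a₀ + a₁ * 1 + a₂ * 1 ^ 2‖)
        (max (‖a₀ + a₁ * ω + a₂ * ω ^ 2‖)
          (‖a₀ + a₁ * ω ^ 2 + a₂ * (ω ^ 2) ^ 2‖)) = 1 ∧
      (1 + 2 * Real.sqrt 3) / 4 ≤ ‖a₀ + a₁ * z₀ + a₂ * z₀ ^ 2‖ ∧
      max (‖a₀ + a₁ * 1 + a₂ * 1 ^ 2‖)
        (max (‖a₀ + a₁ * ω + a₂ * ω ^ 2‖)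
          (‖a₀ + a₁ * ω ^ 2 + a₂ * (ω ^ 2) ^ 2‖))
        < ‖a₀ + a₁ * z₀ + a₂ * z₀ ^ 2‖ := by
  have h : ω ^ 2 + ω + 1 = 0 := hω ▸ exp_two_pi_I_div_three_sq_add_self_add_one
  have hvertices : max ‖(1 + (√3 : ℂ)) / 3 + (1 - √3) / 3 * 1 + 1 / 3 * 1 ^ 2‖
      (max ‖(1 + (√3 : ℂ)) / 3 + (1 - √3) / 3 * ω + 1 / 3 * ω ^ 2‖
        ‖(1 + (√3 : ℂ)) / 3 + (1 - √3) / 3 * ω ^ 2 + 1 / 3 * (ω ^ 2) ^ 2‖) = 1 := by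
    have hone : (1 + (√3 : ℂ)) / 3 + (1 - √3) / 3 * 1 + 1 / 3 * 1 ^ 2 = 1 := by ring
    rw [hone, norm_quadratic_eq_one h, norm_quadratic_eq_one (sq_sq_add_sq_add_one h), norm_one,
      max_self, max_self]
  have hcenter : ‖(1 + (√3 : ℂ)) / 3 + (1 - √3) / 3 * (-1 / 2) + 1 / 3 * (-1 / 2) ^ 2‖
      = (1 + 2 * √3) / 4 := by
    rw [show (1 + (√3 : ℂ)) / 3 + (1 - √3) / 3 * (-1 / 2) + 1 / 3 * (-1 / 2) ^ 2
      = ((1 + 2 * √3) / 4 : ℝ) by push_cast; ring, norm_real, Real.norm_of_nonneg (by positivity)]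
  have hsqrt3 : 3 / 2 < √3 := by rw [Real.lt_sqrt (by norm_num)]; norm_num
  refine ⟨_, _, _, _, neg_half_mem_convexHull h, hvertices, hcenter.ge, ?_⟩
  rw [hvertices, hcenter]
  linarith
end

section
/- Fix N ≥ 3 and let f : Ω_N^n → ℂ be a polynomial of degree at most d with ‖f‖_∞ ≤ 1 on Ω_N^n, whose Fourier coefficients satisfy (∑_{|α| ≤ d} |a_α|^{2d/(d+1)})^{(d+1)/(2d)} ≤ B. Then for every ε > 0, there is a polynomial g depending on at most d·B^{2d}/ε^{2d} coordinates such that ∑_α |a_α - ĝ(α)|² ≤ ε², where ĝ is the Fourier coefficient sequence of g. -/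
/-!
Hard thresholding. Keep exactly the coefficients of size at least `c = ε^(d+1) / B^d`. With
`p = 2d/(d+1)` and `∑ ‖a α‖^p ≤ B^p`, Chebyshev's inequality bounds the number of kept
coefficients by `B^p / c^p = (B/ε)^(2d)`. The discarded ones satisfy
`‖a α‖^2 ≤ c^(2-p) ‖a α‖^p`, so their total squared mass is at most `c^(2-p) B^p = ε^2`.
A monomial of degree at most `d` involves at most `d` coordinates.
-/

open Finset Real

section HardThreshold

variable {ι E : Type*} [NormedAddCommGroup E]

noncomputable def hardThreshold (c : ℝ) (a : ι → E) : ι → E :=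
  fun i => if c ≤ ‖a i‖ then a i else 0

lemma le_norm_of_hardThreshold_ne_zero {c : ℝ} {a : ι → E} {i : ι}
    (h : hardThreshold c a i ≠ 0) : c ≤ ‖a i‖ := by
  by_contra hc
  exact h (if_neg hc)

lemma norm_sub_hardThreshold_sq_le {c p : ℝ} (hc : 0 ≤ c) (hp : p ≤ 2) (a : ι → E) (i : ι) :
    ‖a i - hardThreshold c a i‖ ^ 2 ≤ c ^ (2 - p) * ‖a i‖ ^ p := by
  unfold hardThreshold
  split_ifs with hlarge
  · rw [sub_self, norm_zero, zero_pow two_ne_zero]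
    positivity
  · rw [sub_zero, ← rpow_natCast, Nat.cast_ofNat, show (2 : ℝ) = (2 - p) + p by ring,
      rpow_add' (norm_nonneg _) (by norm_num), add_sub_cancel_right]
    gcongr
    exact (not_le.mp hlarge).le

variable [Fintype ι]

lemma card_le_norm_mul_rpow_le_sum {c p : ℝ} (hc : 0 ≤ c) (hp : 0 ≤ p) (a : ι → E) :
    (#{i | c ≤ ‖a i‖} : ℝ) * c ^ p ≤ ∑ i, ‖a i‖ ^ p := by
  calc (#{i | c ≤ ‖a i‖} : ℝ) * c ^ p = ∑ i with c ≤ ‖a i‖, c ^ p := by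
        rw [sum_const, nsmul_eq_mul]
    _ ≤ ∑ i with c ≤ ‖a i‖, ‖a i‖ ^ p :=
        sum_le_sum fun i hi => rpow_le_rpow hc (mem_filter.mp hi).2 hp
    _ ≤ ∑ i, ‖a i‖ ^ p :=
        sum_le_sum_of_subset_of_nonneg (filter_subset _ _) fun i _ _ => by positivity

lemma sum_norm_sub_hardThreshold_sq_le {c p : ℝ} (hc : 0 ≤ c) (hp : p ≤ 2) (a : ι → E) :
    ∑ i, ‖a i - hardThreshold c a i‖ ^ 2 ≤ c ^ (2 - p) * ∑ i, ‖a i‖ ^ p := by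
  rw [mul_sum]
  exact sum_le_sum fun i _ => norm_sub_hardThreshold_sq_le hc hp a i

lemma eq_zero_of_sum_norm_rpow_nonpos {p : ℝ} (hp : p ≠ 0) {a : ι → E}
    (h : ∑ i, ‖a i‖ ^ p ≤ 0) : a = 0 := by
  have hsum := le_antisymm h (sum_nonneg fun i _ => by positivity)
  funext i
  rw [sum_eq_zero_iff_of_nonneg fun i _ => by positivity] at hsum
  exact norm_eq_zero.mp ((rpow_eq_zero (norm_nonneg _) hp).mp (hsum i (mem_univ i)))

end HardThreshold

lemma card_filter_ne_zero_le_sum {ι : Type*} [Fintype ι] (α : ι → ℕ) :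
    #{j | α j ≠ 0} ≤ ∑ j, α j := by
  rw [← sum_filter_ne_zero]
  simpa using card_nsmul_le_sum _ α 1 fun j hj =>
    Nat.one_le_iff_ne_zero.mpr (mem_filter.mp hj).2

section BalancedExponent

variable {d : ℕ} {p B ε : ℝ}

lemma threshold_rpow (hB : 0 < B) (hε : 0 < ε) (q : ℝ) :
    (ε ^ (d + 1) / B ^ d) ^ q = B ^ q * (ε / B) ^ ((d + 1) * q) := by
  rw [show ε ^ (d + 1) / B ^ d = B * (ε / B) ^ (d + 1) by rw [div_pow]; field_simp; ring,
    mul_rpow hB.le (by positivity), ← rpow_natCast, ← rpow_mul (by positivity)]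
  push_cast
  ring_nf

variable {ι E : Type*} [Fintype ι] [NormedAddCommGroup E] {a : ι → E}

lemma card_le_of_sum_norm_rpow_le (hp : (d + 1) * p = 2 * d) (hB : 0 < B) (hε : 0 < ε)
    (ha : ∑ i, ‖a i‖ ^ p ≤ B ^ p) :
    (#{i | ε ^ (d + 1) / B ^ d ≤ ‖a i‖} : ℝ) ≤ B ^ (2 * d) / ε ^ (2 * d) := by
  have hp0 : 0 ≤ p := by nlinarith
  have hcount := (card_le_norm_mul_rpow_le_sum (c := ε ^ (d + 1) / B ^ d) (by positivity)
    hp0 a).trans ha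
  rw [threshold_rpow hB hε, hp, show (2 * d : ℝ) = (2 * d : ℕ) by push_cast; ring, rpow_natCast,
    mul_left_comm, mul_le_iff_le_one_right (by positivity), div_pow, ← mul_div_assoc,
    div_le_one (by positivity)] at hcount
  rwa [le_div_iff₀ (by positivity)]

lemma sum_norm_sub_hardThreshold_sq_le_sq (hp : (d + 1) * p = 2 * d) (hB : 0 < B)
    (hε : 0 < ε) (ha : ∑ i, ‖a i‖ ^ p ≤ B ^ p) :
    ∑ i, ‖a i - hardThreshold (ε ^ (d + 1) / B ^ d) a i‖ ^ 2 ≤ ε ^ 2 := by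
  have hp2 : p ≤ 2 := by nlinarith
  calc _ ≤ (ε ^ (d + 1) / B ^ d) ^ (2 - p) * ∑ i, ‖a i‖ ^ p :=
        sum_norm_sub_hardThreshold_sq_le (by positivity) hp2 a
    _ ≤ (ε ^ (d + 1) / B ^ d) ^ (2 - p) * B ^ p := by gcongr
    _ = (B * (ε / B)) ^ 2 := by
        rw [threshold_rpow hB hε, show ((d : ℝ) + 1) * (2 - p) = (2 : ℕ) by push_cast; linarith,
          rpow_natCast, mul_right_comm, ← rpow_add hB, sub_add_cancel, rpow_two, mul_pow]
    _ = ε ^ 2 := by field_simp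

end BalancedExponent

theorem stmt17_general (N n d : ℕ) (hd : 1 ≤ d)
    (a : (Fin n → Fin N) → ℂ)
    (hdeg : ∀ α : Fin n → Fin N, d < ∑ j, (α j : ℕ) → a α = 0)
    (B : ℝ) (hB : 0 ≤ B)
    (hBH : (∑ α : Fin n → Fin N, ‖a α‖ ^ ((2 * d : ℝ) / (d + 1)))
        ^ ((d + 1 : ℝ) / (2 * d)) ≤ B)
    (ε : ℝ) (hε : 0 < ε) :
    ∃ (b : (Fin n → Fin N) → ℂ) (S : Finset (Fin n)),
      (S.card : ℝ) ≤ d * B ^ (2 * d) / ε ^ (2 * d) ∧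
      (∀ α : Fin n → Fin N, b α ≠ 0 → ∀ j, (α j : ℕ) ≠ 0 → j ∈ S) ∧
      ∑ α : Fin n → Fin N, ‖a α - b α‖ ^ 2 ≤ ε ^ 2 := by
  set p : ℝ := 2 * d / (d + 1)
  have hp : 0 < p := by positivity
  have hpd : (d + 1) * p = 2 * d := by simp only [p]; field_simp
  have ha : ∑ α, ‖a α‖ ^ p ≤ B ^ p := by
    rwa [← inv_div (2 * d : ℝ), rpow_inv_le_iff_of_pos (by positivity) hB hp] at hBH
  rcases hB.eq_or_lt with rfl | hB
  · obtain rfl : a = 0 :=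
      eq_zero_of_sum_norm_rpow_nonpos hp.ne' (by rwa [zero_rpow hp.ne'] at ha)
    exact ⟨0, ∅, by simp; positivity, by simp, by simp; positivity⟩
  set c := ε ^ (d + 1) / B ^ d
  let T : Finset (Fin n → Fin N) := {α | c ≤ ‖a α‖}
  refine ⟨hardThreshold c a, T.biUnion fun α => {j | (α j : ℕ) ≠ 0}, ?_, ?_,
    sum_norm_sub_hardThreshold_sq_le_sq hpd hB hε ha⟩
  · have hdegT : ∀ α ∈ T, ∑ j, (α j : ℕ) ≤ d := fun α hα => not_lt.mp fun hlt =>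
      (lt_of_lt_of_le (by positivity) (mem_filter.mp hα).2).ne' (by rw [hdeg α hlt, norm_zero])
    have hsupp : ∀ α ∈ T, #{j | (α j : ℕ) ≠ 0} ≤ d := fun α hα =>
      (card_filter_ne_zero_le_sum _).trans (hdegT α hα)
    calc (#(T.biUnion _) : ℝ) ≤ #T * d := mod_cast card_biUnion_le_card_mul T _ d hsupp
      _ ≤ B ^ (2 * d) / ε ^ (2 * d) * d := by
          gcongr
          exact card_le_of_sum_norm_rpow_le hpd hB hε ha
      _ = d * B ^ (2 * d) / ε ^ (2 * d) := by ring
  · intro α hα j hj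
    exact mem_biUnion.mpr ⟨α, mem_filter.mpr ⟨mem_univ α, le_norm_of_hardThreshold_ne_zero hα⟩,
      mem_filter.mpr ⟨mem_univ j, hj⟩⟩

theorem stmt17 (N n d : ℕ) (hN : 3 ≤ N) (hd : 1 ≤ d) (hn : 1 ≤ n)
    (a : (Fin n → Fin N) → ℂ)
    (hdeg : ∀ α : Fin n → Fin N, d < ∑ j, (α j : ℕ) → a α = 0)
    (hbdd : ∀ z : Fin n → ℂ, (∀ j, z j ^ N = 1) →
      ‖∑ α : Fin n → Fin N, a α * ∏ j, z j ^ (α j : ℕ)‖ ≤ 1)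
    (B : ℝ) (hB : 0 ≤ B)
    (hBH : (∑ α : Fin n → Fin N, ‖a α‖ ^ ((2 * d : ℝ) / (d + 1)))
        ^ ((d + 1 : ℝ) / (2 * d)) ≤ B)
    (ε : ℝ) (hε : 0 < ε) :
    ∃ (b : (Fin n → Fin N) → ℂ) (S : Finset (Fin n)),
      (S.card : ℝ) ≤ d * B ^ (2 * d) / ε ^ (2 * d) ∧
      (∀ α : Fin n → Fin N, b α ≠ 0 → ∀ j, (α j : ℕ) ≠ 0 → j ∈ S) ∧
      ∑ α : Fin n → Fin N, ‖a α - b α‖ ^ 2 ≤ ε ^ 2 :=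
  stmt17_general N n d hd a hdeg B hB hBH ε hε
end
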